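/- arXiv:2506.15654 — 5 statements merged into one kernel-verified Lean document; each statement's English description precedes it below -/
import Mathlib

section
/- Let A be a finite nonempty set, πβ a strictly positive probability mass function on A, A_adv : A → ℝ, λ > 0. Define π*(a) = exp(A_adv(a)/λ)/Z with Z = Σ_a exp(A_adv(a)/λ), and π*β(a) = πβ(a)·exp(A_adv(a)/λ)/Zβ with Zβ = Σ_a πβ(a)·exp(A_adv(a)/λ). Then D_KL(π*‖π*β) ≥ H(π*, πβ) − H(πβ, π*), where H(p, q) = −Σ_a p(a)·log q(a) denotes cross-entropy and D_KL(p‖q) = Σ_a p(a)·log(p(a)/q(a)). -/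
/-! Both distributions are exponential tiltings `w a * exp (f a) / Z` of a base weight, so their
logarithms are affine in `f`, and every cross-entropy term collapses to an average of `f` and the
log-normalizers. The claim then reduces to `∑ πβ f ≤ log Zβ`, which is Jensen's inequality for
`exp`. -/

open Finset

namespace Real

variable {A : Type*} [Fintype A]

theorem sum_mul_le_log_sum_mul_exp (w f : A → ℝ) (hw : ∀ a, 0 ≤ w a) (hw1 : ∑ a, w a = 1) :
    ∑ a, w a * f a ≤ log (∑ a, w a * exp (f a)) := by
  have hjensen : exp (∑ a, w a * f a) ≤ ∑ a, w a * exp (f a) := by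
    simpa only [smul_eq_mul] using
      convexOn_exp.map_sum_le (fun a _ => hw a) hw1 (fun a _ => Set.mem_univ (f a))
  rw [le_log_iff_exp_le ((exp_pos _).trans_le hjensen)]
  exact hjensen

theorem sum_mul_log_of_eq_mul_exp_div (p w f q : A → ℝ) (Z : ℝ) (hp : ∑ a, p a = 1)
    (hw : ∀ a, 0 < w a) (hZ : 0 < Z) (hq : ∀ a, q a = w a * exp (f a) / Z) :
    ∑ a, p a * log (q a) = ∑ a, p a * log (w a) + ∑ a, p a * f a - log Z := by
  have hlog : ∀ a, log (q a) = log (w a) + f a - log Z := fun a => by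
    rw [hq, log_div (mul_pos (hw a) (exp_pos _)).ne' hZ.ne', log_mul (hw a).ne' (exp_pos _).ne',
      log_exp]
  simp only [hlog, mul_sub, mul_add, sum_sub_distrib, sum_add_distrib, ← sum_mul, hp, one_mul]

end Real

open Real in
theorem kl_lower_bound_constrained_vs_unbiased_general
    {A : Type*} [Fintype A]
    (pb : A → ℝ) (hpos : ∀ a, 0 < pb a) (hsum : ∑ a, pb a = 1)
    (Aadv : A → ℝ) (lam : ℝ)
    (Z : ℝ) (hZ : Z = ∑ a, Real.exp (Aadv a / lam))
    (Zb : ℝ) (hZb : Zb = ∑ a, pb a * Real.exp (Aadv a / lam))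
    (ps : A → ℝ) (hps : ∀ a, ps a = Real.exp (Aadv a / lam) / Z)
    (psb : A → ℝ) (hpsb : ∀ a, psb a = pb a * Real.exp (Aadv a / lam) / Zb) :
    ∑ a, ps a * Real.log (ps a / psb a) ≥
      (-∑ a, ps a * Real.log (pb a)) - (-∑ a, pb a * Real.log (ps a)) := by
  set f : A → ℝ := fun a => Aadv a / lam
  have hA : (univ : Finset A).Nonempty := nonempty_of_sum_ne_zero (hsum ▸ one_ne_zero)
  have hZ0 : 0 < Z := hZ ▸ sum_pos (fun a _ => exp_pos _) hA
  have hZb0 : 0 < Zb := hZb ▸ sum_pos (fun a _ => mul_pos (hpos a) (exp_pos _)) hA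
  have hps' : ∀ a, ps a = (fun _ => (1 : ℝ)) a * exp (f a) / Z := fun a => by simp [hps, f]
  have hps_sum : ∑ a, ps a = 1 := by
    simp only [hps, ← sum_div, ← hZ, div_self hZ0.ne']
  have hps_pos : ∀ a, 0 < ps a := fun a => hps a ▸ div_pos (exp_pos _) hZ0
  have hpsb_pos : ∀ a, 0 < psb a := fun a => hpsb a ▸ div_pos (mul_pos (hpos a) (exp_pos _)) hZb0
  have hKL : ∑ a, ps a * log (ps a / psb a)
      = ∑ a, ps a * log (ps a) - ∑ a, ps a * log (psb a) := by
    simp only [log_div (hps_pos _).ne' (hpsb_pos _).ne', mul_sub, sum_sub_distrib]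
  have hps_ps := sum_mul_log_of_eq_mul_exp_div ps _ f ps Z hps_sum (fun _ => one_pos) hZ0 hps'
  have hps_psb := sum_mul_log_of_eq_mul_exp_div ps pb f psb Zb hps_sum hpos hZb0 hpsb
  have hpb_ps := sum_mul_log_of_eq_mul_exp_div pb _ f ps Z hsum (fun _ => one_pos) hZ0 hps'
  have hjensen : ∑ a, pb a * f a ≤ log Zb :=
    hZb ▸ sum_mul_le_log_sum_mul_exp pb f (fun a => (hpos a).le) hsum
  simp only [log_one, mul_zero, sum_const_zero, zero_add] at hps_ps hpb_ps
  linarith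

theorem kl_lower_bound_constrained_vs_unbiased
    {A : Type*} [Fintype A] [Nonempty A]
    (pb : A → ℝ) (hpos : ∀ a, 0 < pb a) (hsum : ∑ a, pb a = 1)
    (Aadv : A → ℝ) (lam : ℝ) (hlam : 0 < lam)
    (Z : ℝ) (hZ : Z = ∑ a, Real.exp (Aadv a / lam))
    (Zb : ℝ) (hZb : Zb = ∑ a, pb a * Real.exp (Aadv a / lam))
    (ps : A → ℝ) (hps : ∀ a, ps a = Real.exp (Aadv a / lam) / Z)
    (psb : A → ℝ) (hpsb : ∀ a, psb a = pb a * Real.exp (Aadv a / lam) / Zb) :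
    ∑ a, ps a * Real.log (ps a / psb a) ≥
      (-∑ a, ps a * Real.log (pb a)) - (-∑ a, pb a * Real.log (ps a)) :=
  kl_lower_bound_constrained_vs_unbiased_general pb hpos hsum Aadv lam Z hZ Zb hZb ps hps psb hpsb
end

section
/- Fix a state s. Let the action space be ℝ, let π⁺ and π⁻ be probability distributions on ℝ with finite support (or finite first moments), let ε ∈ [0,1], and define the mixture πβ = (1−ε)·π⁺ + ε·π⁻. Let w : ℝ → ℝ_{>0} be a positive weight function. Consider the weighted squared loss L(μ) = E_{a∼πβ}[w(a)·(a − μ)²/(2σ²)] for σ > 0, and let μ* = argmin L, and μ⁺ = argmin of the corresponding loss with πβ replaced by π⁺. Then |μ* − μ⁺| ≤ ε·E_{a∼π⁻}[w(a)·|a − μ⁺|] / E_{a∼πβ}[w(a)]. -/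
/-! Both minimizers are weighted means, so `∫ w(a)(a - μ⁺) dπ⁺ = 0` and
`(∫ w dπβ)(μ* - μ⁺) = ∫ w(a)(a - μ⁺) dπβ`. Since the integrand has zero `π⁺`-mean, the
mixture leaves only its `ε`-weighted `π⁻`-mean, which is bounded by `ε ∫ w(a)|a - μ⁺| dπ⁻`. -/

open MeasureTheory

lemma mul_eq_of_isMinOn_quadratic {I B A c x₀ : ℝ} (hI : 0 < I) (hc : 0 < c)
    (hmin : IsMinOn (fun x => (I * x ^ 2 - 2 * B * x + A) / c) Set.univ x₀) :
    I * x₀ = B := by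
  have hle := (div_le_div_iff_of_pos_right hc).1 (isMinOn_univ_iff.1 hmin (B / I))
  have hB : I * (B / I) = B := mul_div_cancel₀ B hI.ne'
  have hsq : (I * x₀ - B) ^ 2 ≤ 0 := by nlinarith [mul_le_mul_of_nonneg_left hle hI.le]
  nlinarith [sq_nonneg (I * x₀ - B)]

section WeightedIntegrals

variable {α : Type*} [MeasurableSpace α] {ν : Measure α}

lemma integrable_mul_sub_const {w g : α → ℝ} (hw : Integrable w ν)
    (hwg : Integrable (fun a => w a * g a) ν) (m : ℝ) :
    Integrable (fun a => w a * (g a - m)) ν := by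
  refine (hwg.sub (hw.const_mul m)).congr (ae_of_all _ fun a => ?_)
  simp only [Pi.sub_apply]
  ring

lemma integral_mul_sub_const {w g : α → ℝ} (hw : Integrable w ν)
    (hwg : Integrable (fun a => w a * g a) ν) (m : ℝ) :
    ∫ a, w a * (g a - m) ∂ν = ∫ a, w a * g a ∂ν - m * ∫ a, w a ∂ν := by
  simp only [mul_sub, mul_comm (w _) m]
  rw [integral_sub hwg (hw.const_mul m), integral_const_mul]

lemma integral_mul_sub_const_sq {w g : α → ℝ} (hw : Integrable w ν)
    (hwg : Integrable (fun a => w a * g a) ν) (hwg2 : Integrable (fun a => w a * g a ^ 2) ν)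
    (m : ℝ) :
    ∫ a, w a * (g a - m) ^ 2 ∂ν
      = (∫ a, w a ∂ν) * m ^ 2 - 2 * (∫ a, w a * g a ∂ν) * m + ∫ a, w a * g a ^ 2 ∂ν := by
  have hexpand : (fun a => w a * (g a - m) ^ 2)
      = fun a => (w a * g a ^ 2 - 2 * m * (w a * g a)) + m ^ 2 * w a := by
    funext a; ring
  have hsub : Integrable (fun a => w a * g a ^ 2 - 2 * m * (w a * g a)) ν :=
    hwg2.sub (hwg.const_mul _)
  rw [hexpand, integral_add hsub (hw.const_mul _),
    integral_sub hwg2 (hwg.const_mul _), integral_const_mul, integral_const_mul]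
  ring

lemma abs_integral_mul_le_integral_mul_abs {w g : α → ℝ} (hw : ∀ a, 0 ≤ w a) :
    |∫ a, w a * g a ∂ν| ≤ ∫ a, w a * |g a| ∂ν := by
  simpa only [Real.norm_eq_abs, abs_mul, abs_of_nonneg (hw _)] using
    norm_integral_le_integral_norm (μ := ν) (fun a => w a * g a)

lemma integral_ofReal_smul_add_ofReal_smul {μ₁ μ₂ : Measure α} {s t : ℝ}
    (hs : 0 ≤ s) (ht : 0 ≤ t) {f : α → ℝ}
    (hf : Integrable f (ENNReal.ofReal s • μ₁ + ENNReal.ofReal t • μ₂)) :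
    ∫ a, f a ∂(ENNReal.ofReal s • μ₁ + ENNReal.ofReal t • μ₂)
      = s * ∫ a, f a ∂μ₁ + t * ∫ a, f a ∂μ₂ := by
  obtain ⟨hf₁, hf₂⟩ := integrable_add_measure.1 hf
  rw [integral_add_measure hf₁ hf₂, integral_smul_measure, integral_smul_measure,
    ENNReal.toReal_ofReal hs, ENNReal.toReal_ofReal ht, smul_eq_mul, smul_eq_mul]

lemma integral_mul_eq_of_isMinOn_weighted_sq_loss {w g : α → ℝ} {c μ₀ : ℝ} (hc : 0 < c)
    (hw : Integrable w ν) (hwg : Integrable (fun a => w a * g a) ν)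
    (hwg2 : Integrable (fun a => w a * g a ^ 2) ν) (hpos : 0 < ∫ a, w a ∂ν)
    (hmin : IsMinOn (fun μ => ∫ a, w a * (g a - μ) ^ 2 / c ∂ν) Set.univ μ₀) :
    (∫ a, w a ∂ν) * μ₀ = ∫ a, w a * g a ∂ν := by
  simp only [integral_div, integral_mul_sub_const_sq hw hwg hwg2] at hmin
  exact mul_eq_of_isMinOn_quadratic hpos hc hmin

end WeightedIntegrals

theorem awr_l2_contamination_bias_bound
    (pplus pminus : Measure ℝ)
    [IsProbabilityMeasure pplus] [IsProbabilityMeasure pminus]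
    (ε : ℝ) (hε : ε ∈ Set.Icc (0:ℝ) 1)
    (pβ : Measure ℝ)
    (hpβ : pβ = (ENNReal.ofReal (1 - ε)) • pplus + (ENNReal.ofReal ε) • pminus)
    (σ : ℝ) (hσ : 0 < σ)
    (w : ℝ → ℝ) (hw : ∀ a, 0 < w a)
    (hIntw : Integrable w pβ) (hIntw' : Integrable w pplus)
    (hIntwa : Integrable (fun a => w a * a) pβ)
    (hIntwa' : Integrable (fun a => w a * a) pplus)
    (hIntwa2 : Integrable (fun a => w a * a ^ 2) pβ)
    (hIntwa2' : Integrable (fun a => w a * a ^ 2) pplus)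
    (hwb : 0 < ∫ a, w a ∂pβ) (hwp : 0 < ∫ a, w a ∂pplus)
    (L Lplus : ℝ → ℝ)
    (hL : ∀ μ, L μ = ∫ a, w a * (a - μ) ^ 2 / (2 * σ ^ 2) ∂pβ)
    (hLplus : ∀ μ, Lplus μ = ∫ a, w a * (a - μ) ^ 2 / (2 * σ ^ 2) ∂pplus)
    (μstar μplus : ℝ)
    (hμstar : IsMinOn L Set.univ μstar)
    (hμplus : IsMinOn Lplus Set.univ μplus) :
    |μstar - μplus| ≤
      ε * (∫ a, w a * |a - μplus| ∂pminus) / ∫ a, w a ∂pβ := by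
  obtain ⟨hε0, hε1⟩ := hε
  have h2σ : 0 < 2 * σ ^ 2 := by positivity
  rw [show L = _ from funext hL] at hμstar
  rw [show Lplus = _ from funext hLplus] at hμplus
  have hstar := integral_mul_eq_of_isMinOn_weighted_sq_loss h2σ hIntw hIntwa hIntwa2 hwb hμstar
  have hplus := integral_mul_eq_of_isMinOn_weighted_sq_loss h2σ hIntw' hIntwa' hIntwa2' hwp hμplus
  have hβ : ∫ a, w a * (a - μplus) ∂pβ = (∫ a, w a ∂pβ) * (μstar - μplus) := by
    rw [integral_mul_sub_const hIntw hIntwa, ← hstar]; ring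
  have hcentered : ∫ a, w a * (a - μplus) ∂pplus = 0 := by
    rw [integral_mul_sub_const hIntw' hIntwa', ← hplus]; ring
  have hmix : ∫ a, w a * (a - μplus) ∂pβ = ε * ∫ a, w a * (a - μplus) ∂pminus := by
    have hint := integrable_mul_sub_const hIntw hIntwa μplus
    subst hpβ
    rw [integral_ofReal_smul_add_ofReal_smul (by linarith) hε0 hint, hcentered]; ring
  have hdiff : μstar - μplus = ε * (∫ a, w a * (a - μplus) ∂pminus) / ∫ a, w a ∂pβ := by
    rw [← hmix, hβ, mul_div_cancel_left₀ _ hwb.ne']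
  rw [hdiff, abs_div, abs_mul, abs_of_nonneg hε0, abs_of_pos hwb]
  gcongr
  exact abs_integral_mul_le_integral_mul_abs fun a => (hw a).le
end

section
/- Let F : ℝ → ℝ be convex and twice continuously differentiable, let π⁺, π⁻ be probability distributions on ℝ, ε ∈ [0,1], πβ = (1−ε)π⁺ + ε π⁻, and w : ℝ → ℝ_{>0} a weight function. Define G(μ) = E_{a∼πβ}[w(a)·F(μ − a)] and G⁺(μ) = E_{a∼π⁺}[w(a)·F(μ − a)]. Suppose μ* minimizes G and μ⁺ minimizes G⁺, with both first-order conditions G′(μ*) = 0 and (G⁺)′(μ⁺) = 0 holding, and suppose inf over ξ between μ⁺ and μ* of E_{a∼πβ}[w(a)·F″(ξ − a)] = H > 0. Then |μ* − μ⁺| ≤ ε·E_{a∼π⁻}[w(a)·sup|F′|] / H, where sup|F′| denotes the supremum of |F′(μ⁺ − a)| over a in the support of π⁻. -/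
/-!
On the segment between `μ⁺` and `μ*` the objective `G` is `H`-strongly convex: by Taylor's
formula with the tent-shaped Peano kernel, the convexity gap of each `F (· - a)` is an average of
`F''` over the segment, and after exchanging the integrals (Tonelli) the gap of `G` is an average of
the curvatures `∫ w F''(ξ - a) dπβ ≥ H`. On the other hand `G = (1 - ε) G⁺ + ε G⁻`, where `G⁺` is
minimal at `μ⁺` and, by the gradient inequality for `F`, `G⁻` drops below `G⁻(μ⁺)` by at most
`∫ w M dπ⁻ · |x - μ⁺|`. So `G` falls below `G(μ⁺)` at most at the linear rate `ε ∫ w M dπ⁻`, while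
an `H`-strongly convex function falls at rate at least `H |μ* - μ⁺|` when leaving `μ⁺` towards its
minimiser `μ*`.
-/

open MeasureTheory Set Filter

theorem ConvexOn.add_deriv_mul_sub_le {f : ℝ → ℝ} {S : Set ℝ} (hf : ConvexOn ℝ S f) {x y : ℝ}
    (hx : x ∈ S) (hy : y ∈ S) (hd : DifferentiableAt ℝ f x) :
    f x + deriv f x * (y - x) ≤ f y := by
  rcases lt_trichotomy x y with h | rfl | h
  · have := hf.deriv_le_slope hx hy h hd
    rw [slope_def_field, le_div_iff₀ (sub_pos.2 h)] at this
    linarith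
  · simp
  · have := hf.slope_le_deriv hy hx h hd
    rw [slope_def_field, div_le_iff₀ (sub_pos.2 h)] at this
    linarith

theorem ConvexOn.le_add_mul_abs_sub {f : ℝ → ℝ} {S : Set ℝ} (hf : ConvexOn ℝ S f) {x y M : ℝ}
    (hx : x ∈ S) (hy : y ∈ S) (hd : DifferentiableAt ℝ f y) (hM : |deriv f y| ≤ M) :
    f y ≤ f x + M * |x - y| :=
  calc f y ≤ f x - deriv f y * (x - y) := by linarith [hf.add_deriv_mul_sub_le hy hx hd]
    _ ≤ f x + |deriv f y * (x - y)| := by linarith [neg_le_abs (deriv f y * (x - y))]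
    _ ≤ f x + M * |x - y| := by rw [abs_mul]; gcongr

theorem ConvexOn.iteratedDeriv_two_nonneg {f : ℝ → ℝ} (hf : ConvexOn ℝ univ f)
    (hd : Differentiable ℝ f) (x : ℝ) : 0 ≤ iteratedDeriv 2 f x := by
  rw [iteratedDeriv_succ, iteratedDeriv_one]
  exact (monotoneOn_univ.mp (hf.monotoneOn_deriv fun x _ => hd x)).deriv_nonneg

theorem ContDiff.hasDerivAt_deriv {f : ℝ → ℝ} (hf : ContDiff ℝ 2 f) (x : ℝ) :
    HasDerivAt (deriv f) (iteratedDeriv 2 f x) x := by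
  rw [iteratedDeriv_succ, iteratedDeriv_one]
  exact ((contDiff_succ_iff_deriv.mp hf).2.2.differentiable one_ne_zero x).hasDerivAt

theorem integral_sub_mul_iteratedDeriv_two {f : ℝ → ℝ} (hf : ContDiff ℝ 2 f) (a b c : ℝ) :
    ∫ ξ in a..b, (ξ - c) * iteratedDeriv 2 f ξ
      = (b - c) * deriv f b - (a - c) * deriv f a - (f b - f a) := by
  have hd : Differentiable ℝ f := hf.differentiable two_ne_zero
  have hf2 : Continuous (iteratedDeriv 2 f) := hf.continuous_iteratedDeriv 2 le_rfl
  rw [intervalIntegral.integral_mul_deriv_eq_deriv_mul (u' := fun _ => 1)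
      (fun x _ => by simpa using (hasDerivAt_id x).sub_const c)
      (fun x _ => hf.hasDerivAt_deriv x) intervalIntegrable_const (hf2.intervalIntegrable a b)]
  simp only [one_mul]
  rw [intervalIntegral.integral_deriv_eq_sub (fun x _ => hd x)
    ((hf.continuous_deriv one_le_two).intervalIntegrable a b)]

/-- The Peano kernel of the functional `f ↦ u f(P) + (1 - u) f(Q) - f(u P + (1 - u) Q)`. -/
def tentKernel (P Q u ξ : ℝ) : ℝ := min (u * (ξ - P)) ((1 - u) * (Q - ξ))

section tentKernel

variable {P Q u : ℝ}

theorem continuous_tentKernel : Continuous (tentKernel P Q u) := by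
  unfold tentKernel; fun_prop

theorem tentKernel_nonneg (hu₀ : 0 ≤ u) (hu₁ : u ≤ 1) {ξ : ℝ} (hξ : ξ ∈ Icc P Q) :
    0 ≤ tentKernel P Q u ξ :=
  le_min (mul_nonneg hu₀ (sub_nonneg.2 hξ.1)) (mul_nonneg (sub_nonneg.2 hu₁) (sub_nonneg.2 hξ.2))

theorem integral_tentKernel_mul (hPQ : P ≤ Q) (hu₀ : 0 ≤ u) (hu₁ : u ≤ 1) {h : ℝ → ℝ}
    (hh : Continuous h) :
    ∫ ξ in P..Q, tentKernel P Q u ξ * h ξ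
      = u * (∫ ξ in P..u * P + (1 - u) * Q, (ξ - P) * h ξ)
        - (1 - u) * ∫ ξ in u * P + (1 - u) * Q..Q, (ξ - Q) * h ξ := by
  set Z := u * P + (1 - u) * Q
  have hcross : ∀ ξ, (1 - u) * (Q - ξ) - u * (ξ - P) = Z - ξ := fun ξ => by ring
  have hPZ : P ≤ Z := by nlinarith
  have hZQ : Z ≤ Q := by nlinarith
  have hint : ∀ a b, IntervalIntegrable (fun ξ => tentKernel P Q u ξ * h ξ) volume a b :=
    fun a b => (continuous_tentKernel.mul hh).intervalIntegrable a b
  rw [← intervalIntegral.integral_add_adjacent_intervals (hint P Z) (hint Z Q),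
    ← intervalIntegral.integral_const_mul, ← intervalIntegral.integral_const_mul, sub_eq_add_neg,
    ← intervalIntegral.integral_neg]
  congr 1 <;> refine intervalIntegral.integral_congr fun ξ hξ => ?_
  · rw [uIcc_of_le hPZ] at hξ
    have hle : u * (ξ - P) ≤ (1 - u) * (Q - ξ) := by linarith [hcross ξ, hξ.2]
    simp only [tentKernel, min_eq_left hle]
    ring
  · rw [uIcc_of_le hZQ] at hξ
    have hle : (1 - u) * (Q - ξ) ≤ u * (ξ - P) := by linarith [hcross ξ, hξ.1]
    simp only [tentKernel, min_eq_right hle]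
    ring

theorem integral_tentKernel (hPQ : P ≤ Q) (hu₀ : 0 ≤ u) (hu₁ : u ≤ 1) :
    ∫ ξ in P..Q, tentKernel P Q u ξ = u * (1 - u) * (Q - P) ^ 2 / 2 := by
  have := integral_tentKernel_mul hPQ hu₀ hu₁ continuous_const (h := fun _ => 1)
  simp only [mul_one] at this
  rw [this, intervalIntegral.integral_comp_sub_right (fun x => x) P,
    intervalIntegral.integral_comp_sub_right (fun x => x) Q, integral_id, integral_id]
  ring

theorem sub_eq_integral_tentKernel_mul_iteratedDeriv_two {f : ℝ → ℝ} (hf : ContDiff ℝ 2 f)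
    (hPQ : P ≤ Q) (hu₀ : 0 ≤ u) (hu₁ : u ≤ 1) :
    u * f P + (1 - u) * f Q - f (u * P + (1 - u) * Q)
      = ∫ ξ in P..Q, tentKernel P Q u ξ * iteratedDeriv 2 f ξ := by
  rw [integral_tentKernel_mul hPQ hu₀ hu₁ (hf.continuous_iteratedDeriv 2 le_rfl),
    integral_sub_mul_iteratedDeriv_two hf, integral_sub_mul_iteratedDeriv_two hf]
  ring

theorem sub_comp_sub_eq_setIntegral_tentKernel_mul {f : ℝ → ℝ} (hf : ContDiff ℝ 2 f)
    (hPQ : P ≤ Q) (hu₀ : 0 ≤ u) (hu₁ : u ≤ 1) (a : ℝ) :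
    u * f (P - a) + (1 - u) * f (Q - a) - f (u * P + (1 - u) * Q - a)
      = ∫ ξ in Ioc P Q, tentKernel P Q u ξ * iteratedDeriv 2 f (ξ - a) := by
  have := sub_eq_integral_tentKernel_mul_iteratedDeriv_two (f := fun x => f (x - a))
    (hf.comp (contDiff_id.sub contDiff_const)) hPQ hu₀ hu₁
  rwa [iteratedDeriv_comp_sub_const, intervalIntegral.integral_of_le hPQ] at this

end tentKernel

section Tonelli

variable {α β : Type*} [MeasurableSpace α] [MeasurableSpace β] {μ : Measure α} {ν : Measure β}

theorem ofReal_integral_le_lintegral_ofReal (f : α → ℝ) :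
    ENNReal.ofReal (∫ a, f a ∂μ) ≤ ∫⁻ a, ENNReal.ofReal (f a) ∂μ := by
  by_cases hf : Integrable f μ
  · refine (ENNReal.ofReal_le_ofReal ?_).trans ENNReal.ofReal_toReal_le
    rw [integral_eq_lintegral_pos_part_sub_lintegral_neg_part hf]
    exact sub_le_self _ ENNReal.toReal_nonneg
  · simp [integral_undef hf]

theorem integral_le_integral_integral_swap [SFinite μ] [SFinite ν] {f : α → β → ℝ} {g : β → ℝ}
    (hf : AEMeasurable (Function.uncurry f) (μ.prod ν)) (hf₀ : ∀ a, 0 ≤ᵐ[ν] f a)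
    (hint : ∀ a, Integrable (f a) ν) (hint' : Integrable (fun a => ∫ b, f a b ∂ν) μ)
    (hg : ∀ᵐ b ∂ν, g b ≤ ∫ a, f a b ∂μ) :
    ∫ b, g b ∂ν ≤ ∫ a, ∫ b, f a b ∂ν ∂μ := by
  have hf₀' : 0 ≤ᵐ[μ] fun a => ∫ b, f a b ∂ν := ae_of_all _ fun a => integral_nonneg_of_ae (hf₀ a)
  rw [← ENNReal.ofReal_le_ofReal_iff (integral_nonneg_of_ae hf₀')]
  calc ENNReal.ofReal (∫ b, g b ∂ν)
      ≤ ∫⁻ b, ENNReal.ofReal (g b) ∂ν := ofReal_integral_le_lintegral_ofReal _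
    _ ≤ ∫⁻ b, ∫⁻ a, ENNReal.ofReal (f a b) ∂μ ∂ν := lintegral_mono_ae <| hg.mono fun b hb =>
        (ENNReal.ofReal_le_ofReal hb).trans (ofReal_integral_le_lintegral_ofReal _)
    _ = ∫⁻ a, ∫⁻ b, ENNReal.ofReal (f a b) ∂ν ∂μ :=
        (lintegral_lintegral_swap (f := fun a b => ENNReal.ofReal (f a b))
          (ENNReal.measurable_ofReal.comp_aemeasurable hf)).symm
    _ = ENNReal.ofReal (∫ a, ∫ b, f a b ∂ν ∂μ) := by
        rw [ofReal_integral_eq_lintegral_ofReal hint' hf₀']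
        exact lintegral_congr fun a =>
          (ofReal_integral_eq_lintegral_ofReal (hint a) (hf₀ a)).symm

end Tonelli

theorem aemeasurable_of_aestronglyMeasurable_mul_comp_sub {F w : ℝ → ℝ} {ν : Measure ℝ}
    (hF : Continuous F) (hF₀ : ∃ x, F x ≠ 0)
    (h : ∀ μ, AEStronglyMeasurable (fun a => w a * F (μ - a)) ν) : AEMeasurable w ν := by
  -- where `F (q - ·) ≠ 0`, `w` is the quotient `(w * F (q - ·)) / F (q - ·)`, and countably many
  -- rational `q` suffice to cover `ℝ` by such open sets
  obtain ⟨x₀, hx₀⟩ := hF₀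
  have hFμ : ∀ μ : ℝ, Continuous fun a => F (μ - a) := fun μ => by fun_prop
  have hU : ∀ μ : ℝ, IsOpen {a | F (μ - a) ≠ 0} := fun μ => isOpen_ne_fun (hFμ μ) continuous_const
  have hcover : ⋃ q : ℚ, {a | F (q - a) ≠ 0} = univ := by
    refine eq_univ_of_forall fun a => mem_iUnion.2 ?_
    exact Rat.denseRange_cast.exists_mem_open
      (isOpen_ne_fun (by fun_prop : Continuous fun μ => F (μ - a)) continuous_const)
      ⟨x₀ + a, by simpa using hx₀⟩
  rw [← Measure.restrict_univ (μ := ν), ← hcover, aemeasurable_iUnion_iff]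
  intro q
  refine ((h q).aemeasurable.restrict.div (hFμ q).aemeasurable).congr ?_
  filter_upwards [ae_restrict_mem (hU q).measurableSet] with a ha
  exact mul_div_cancel_right₀ _ ha

section WeightedShift

variable {F w : ℝ → ℝ} {ν : Measure ℝ} [SFinite ν]

theorem mul_le_convexGap_integral_mul_comp_sub (hF : ConvexOn ℝ univ F) (hF₂ : ContDiff ℝ 2 F)
    (hw : ∀ a, 0 ≤ w a) (hwm : AEMeasurable w ν)
    (hint : ∀ μ, Integrable (fun a => w a * F (μ - a)) ν) {P Q u m : ℝ} (hPQ : P ≤ Q)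
    (hu₀ : 0 ≤ u) (hu₁ : u ≤ 1) (hm : ∀ ξ ∈ Icc P Q, m ≤ ∫ a, w a * iteratedDeriv 2 F (ξ - a) ∂ν) :
    m * (u * (1 - u) * (Q - P) ^ 2 / 2)
      ≤ u * (∫ a, w a * F (P - a) ∂ν) + (1 - u) * (∫ a, w a * F (Q - a) ∂ν)
        - ∫ a, w a * F (u * P + (1 - u) * Q - a) ∂ν := by
  set Z := u * P + (1 - u) * Q
  set D := fun a => u * (w a * F (P - a)) + (1 - u) * (w a * F (Q - a)) - w a * F (Z - a)
  set k := fun a ξ => w a * (tentKernel P Q u ξ * iteratedDeriv 2 F (ξ - a))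
  have hPi := (hint P).const_mul u
  have hQi := (hint Q).const_mul (1 - u)
  have hPQi : Integrable (fun a => u * (w a * F (P - a)) + (1 - u) * (w a * F (Q - a))) ν :=
    hPi.add hQi
  have hDint : Integrable D ν := hPQi.sub (hint Z)
  have hk₀ : ∀ a, ∀ ξ ∈ Icc P Q, 0 ≤ k a ξ := fun a ξ hξ =>
    mul_nonneg (hw a) (mul_nonneg (tentKernel_nonneg hu₀ hu₁ hξ)
      (hF.iteratedDeriv_two_nonneg (hF₂.differentiable two_ne_zero) _))
  have hkc : ∀ a, Continuous (k a) := fun a =>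
    continuous_const.mul (continuous_tentKernel.mul
      ((hF₂.continuous_iteratedDeriv 2 le_rfl).comp (continuous_id.sub continuous_const)))
  have hD : ∀ a, D a = ∫ ξ in Ioc P Q, k a ξ := fun a => by
    simp only [D, k, integral_const_mul,
      ← sub_comp_sub_eq_setIntegral_tentKernel_mul hF₂ hPQ hu₀ hu₁ a]
    ring
  have hkm : AEMeasurable (Function.uncurry k) (ν.prod (volume.restrict (Ioc P Q))) :=
    hwm.comp_fst.mul (continuous_tentKernel.comp continuous_snd |>.mul
      ((hF₂.continuous_iteratedDeriv 2 le_rfl).comp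
        (continuous_snd.sub continuous_fst))).aemeasurable
  have hmk : ∀ ξ ∈ Ioc P Q, m * tentKernel P Q u ξ ≤ ∫ a, k a ξ ∂ν := fun ξ hξ => by
    simp only [k, mul_left_comm (w _), integral_const_mul]
    rw [mul_comm m]
    exact mul_le_mul_of_nonneg_left (hm ξ (Ioc_subset_Icc_self hξ))
      (tentKernel_nonneg hu₀ hu₁ (Ioc_subset_Icc_self hξ))
  have hsplit : ∫ a, D a ∂ν = u * (∫ a, w a * F (P - a) ∂ν) + (1 - u) * (∫ a, w a * F (Q - a) ∂ν)
      - ∫ a, w a * F (Z - a) ∂ν := by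
    rw [integral_sub hPQi (hint Z), integral_add hPi hQi, integral_const_mul, integral_const_mul]
  rw [← hsplit, integral_congr_ae (ae_of_all _ hD), ← integral_tentKernel hPQ hu₀ hu₁,
    intervalIntegral.integral_of_le hPQ, ← integral_const_mul]
  exact integral_le_integral_integral_swap hkm
    (fun a => (ae_restrict_iff' measurableSet_Ioc).2
      (ae_of_all _ fun ξ hξ => hk₀ a ξ (Ioc_subset_Icc_self hξ)))
    (fun a => (hkc a).integrableOn_Ioc) (hDint.congr (ae_of_all _ hD))
    ((ae_restrict_iff' measurableSet_Ioc).2 (ae_of_all _ hmk))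

theorem strongConvexOn_integral_mul_comp_sub {s : Set ℝ} {m : ℝ} (hs : Convex ℝ s)
    (hF : ConvexOn ℝ univ F) (hF₂ : ContDiff ℝ 2 F) (hw : ∀ a, 0 ≤ w a) (hwm : AEMeasurable w ν)
    (hint : ∀ μ, Integrable (fun a => w a * F (μ - a)) ν)
    (hm : ∀ ξ ∈ s, m ≤ ∫ a, w a * iteratedDeriv 2 F (ξ - a) ∂ν) :
    StrongConvexOn s m fun μ => ∫ a, w a * F (μ - a) ∂ν := by
  have key : ∀ ⦃x⦄, x ∈ s → ∀ ⦃y⦄, y ∈ s → x ≤ y → ∀ ⦃u⦄, 0 ≤ u → u ≤ 1 →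
      m * (u * (1 - u) * (y - x) ^ 2 / 2)
        ≤ u * (∫ a, w a * F (x - a) ∂ν) + (1 - u) * (∫ a, w a * F (y - a) ∂ν)
          - ∫ a, w a * F (u * x + (1 - u) * y - a) ∂ν :=
    fun x hx y hy hxy u hu₀ hu₁ => mul_le_convexGap_integral_mul_comp_sub hF hF₂ hw hwm hint hxy
      hu₀ hu₁ fun ξ hξ => hm ξ (hs.ordConnected.out hx hy hξ)
  refine ⟨hs, fun x hx y hy a b ha hb hab => ?_⟩
  obtain rfl : b = 1 - a := by linarith
  simp only [smul_eq_mul, Real.norm_eq_abs, sq_abs]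
  rcases le_total x y with hxy | hyx
  · linarith [key hx hy hxy ha (by linarith)]
  · have := key hy hx hyx hb (by linarith)
    rw [sub_sub_cancel, add_comm ((1 - a) * y)] at this
    linarith

end WeightedShift

theorem integral_mul_comp_sub_le_add {F w : ℝ → ℝ} {ν : Measure ℝ} {S : Set ℝ} {M x y : ℝ}
    (hF : ConvexOn ℝ univ F) (hFd : Differentiable ℝ F) (hw : ∀ a, 0 ≤ w a) (hS : ν Sᶜ = 0)
    (hM : ∀ a ∈ S, |deriv F (y - a)| ≤ M) (hx : Integrable (fun a => w a * F (x - a)) ν)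
    (hy : Integrable (fun a => w a * F (y - a)) ν) (hwM : Integrable (fun a => w a * M) ν) :
    ∫ a, w a * F (y - a) ∂ν ≤ ∫ a, w a * F (x - a) ∂ν + (∫ a, w a * M ∂ν) * |x - y| := by
  rw [← integral_mul_const, ← integral_add hx (hwM.mul_const _)]
  refine integral_mono_ae hy (hx.add (hwM.mul_const _)) ?_
  filter_upwards [mem_ae_iff.2 hS] with a ha
  have := hF.le_add_mul_abs_sub (mem_univ (x - a)) (mem_univ (y - a)) (hFd _) (hM a ha)
  rw [sub_sub_sub_cancel_right] at this
  calc w a * F (y - a) ≤ w a * (F (x - a) + M * |x - y|) := mul_le_mul_of_nonneg_left this (hw a)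
    _ = _ := by ring

theorem integral_mixture_mul_comp_sub_le_of_isMinOn {F w : ℝ → ℝ} {ν₁ ν₂ : Measure ℝ} {S : Set ℝ}
    {t s M x y : ℝ} (hF : ConvexOn ℝ univ F) (hFd : Differentiable ℝ F) (hw : ∀ a, 0 ≤ w a)
    (hs : 0 ≤ s) (hmin : IsMinOn (fun μ => ∫ a, w a * F (μ - a) ∂ν₁) univ y) (hS : ν₂ Sᶜ = 0)
    (hM : ∀ a ∈ S, |deriv F (y - a)| ≤ M)
    (hint : ∀ μ, Integrable (fun a => w a * F (μ - a))
      (ENNReal.ofReal t • ν₁ + ENNReal.ofReal s • ν₂))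
    (hwM : Integrable (fun a => w a * M) ν₂) :
    ∫ a, w a * F (y - a) ∂(ENNReal.ofReal t • ν₁ + ENNReal.ofReal s • ν₂)
      ≤ ∫ a, w a * F (x - a) ∂(ENNReal.ofReal t • ν₁ + ENNReal.ofReal s • ν₂)
        + s * (∫ a, w a * M ∂ν₂) * |x - y| := by
  have hsplit := fun μ => integral_add_measure (integrable_add_measure.1 (hint μ)).1
    (integrable_add_measure.1 (hint μ)).2
  have h₁ : ∫ a, w a * F (y - a) ∂(ENNReal.ofReal t • ν₁)
      ≤ ∫ a, w a * F (x - a) ∂(ENNReal.ofReal t • ν₁) := by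
    simp only [integral_smul_measure, smul_eq_mul]
    exact mul_le_mul_of_nonneg_left (hmin (mem_univ x)) ENNReal.toReal_nonneg
  have h₂ := integral_mul_comp_sub_le_add hF hFd hw (by simp [hS]) hM
    (integrable_add_measure.1 (hint x)).2 (integrable_add_measure.1 (hint y)).2
    (hwM.smul_measure ENNReal.ofReal_ne_top)
  rw [integral_smul_measure (fun a => w a * M), ENNReal.toReal_ofReal hs, smul_eq_mul] at h₂
  rw [hsplit, hsplit]
  linarith

theorem StrongConvexOn.mul_abs_sub_le_of_isMinOn {f : ℝ → ℝ} {s : Set ℝ} {m c x₀ y : ℝ}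
    (hf : StrongConvexOn s m f) (hmin : IsMinOn f s x₀) (hx₀ : x₀ ∈ s) (hy : y ∈ s) (hc : 0 ≤ c)
    (hgrowth : ∀ x ∈ s, f y ≤ f x + c * |x - y|) : m * |x₀ - y| ≤ c := by
  set d := |x₀ - y|
  have hstep : ∀ t ∈ Ioo (0 : ℝ) 1, (1 - t) * (m * d ^ 2) ≤ c * d := by
    rintro t ⟨ht₀, ht₁⟩
    -- strong convexity at `t x₀ + (1 - t) y` with the growth bound, and at `(1 - t) x₀ + t y` with
    -- minimality, squeeze `f y - f x₀` from both sides
    have h₁ := hf.2 hx₀ hy ht₀.le (sub_nonneg.2 ht₁.le) (add_sub_cancel t 1)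
    have h₂ := hf.2 hx₀ hy (sub_nonneg.2 ht₁.le) ht₀.le (sub_add_cancel 1 t)
    have h₃ := hgrowth _ (hf.1 hx₀ hy ht₀.le (sub_nonneg.2 ht₁.le) (add_sub_cancel t 1))
    have h₄ := hmin (hf.1 hx₀ hy (sub_nonneg.2 ht₁.le) ht₀.le (sub_add_cancel 1 t))
    have habs : |t • x₀ + (1 - t) • y - y| = t * d := by
      rw [smul_eq_mul, smul_eq_mul, show t * x₀ + (1 - t) * y - y = t * (x₀ - y) by ring,
        abs_mul, abs_of_pos ht₀]
    rw [habs] at h₃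
    simp only [smul_eq_mul, Real.norm_eq_abs, mem_ofPred_eq] at h₁ h₂ h₃ h₄
    refine le_of_mul_le_mul_left ?_ ht₀
    linarith
  have hlim : m * d ^ 2 ≤ c * d := by
    have hcont : Continuous fun t : ℝ => (1 - t) * (m * d ^ 2) := by fun_prop
    have := (hcont.tendsto 0).mono_left (nhdsWithin_le_nhds (s := Ioi 0))
    simp only [sub_zero, one_mul] at this
    exact le_of_tendsto this (eventually_of_mem (Ioo_mem_nhdsGT one_pos) hstep)
  rcases (abs_nonneg (x₀ - y)).eq_or_lt with hd | hd
  · simpa [d, ← hd] using hc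
  · exact le_of_mul_le_mul_right (by nlinarith) hd

theorem awr_general_robustness_bound_general
    (F : ℝ → ℝ) (hFconv : ConvexOn ℝ Set.univ F)
    (hFdiff : ContDiff ℝ 2 F)
    (pplus pminus : Measure ℝ)
    [IsProbabilityMeasure pplus] [IsProbabilityMeasure pminus]
    (ε : ℝ) (hε : ε ∈ Set.Icc (0:ℝ) 1)
    (pβ : Measure ℝ)
    (hpβ : pβ = (ENNReal.ofReal (1 - ε)) • pplus + (ENNReal.ofReal ε) • pminus)
    (w : ℝ → ℝ) (hw : ∀ a, 0 < w a)
    (G Gplus : ℝ → ℝ)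
    (hG : ∀ μ, G μ = ∫ a, w a * F (μ - a) ∂pβ)
    (hGplus : ∀ μ, Gplus μ = ∫ a, w a * F (μ - a) ∂pplus)
    (hGint : ∀ μ, Integrable (fun a => w a * F (μ - a)) pβ)
    (μstar μplus : ℝ)
    (hμstar : IsMinOn G Set.univ μstar)
    (hμplus : IsMinOn Gplus Set.univ μplus)
    (H : ℝ) (hH : 0 < H)
    (hHinf : ∀ ξ ∈ Set.uIcc μplus μstar,
      H ≤ ∫ a, w a * iteratedDeriv 2 F (ξ - a) ∂pβ)
    (S : Set ℝ) (hS : pminus Sᶜ = 0)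
    (M : ℝ) (hM : M = sSup ((fun a => |deriv F (μplus - a)|) '' S))
    (hMbdd : BddAbove ((fun a => |deriv F (μplus - a)|) '' S))
    (hIntM : Integrable (fun a => w a * M) pminus) :
    |μstar - μplus| ≤ ε * (∫ a, w a * M ∂pminus) / H := by
  subst hpβ
  obtain rfl : G = _ := funext hG
  obtain rfl : Gplus = _ := funext hGplus
  have hw₀ : ∀ a, 0 ≤ w a := fun a => (hw a).le
  have hFd : Differentiable ℝ F := hFdiff.differentiable two_ne_zero
  -- `w` is recovered measurably from the functions `w * F (μ - ·)` as soon as `F ≠ 0`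
  have hF₀ : ∃ x, F x ≠ 0 := by
    by_contra! hF
    have := hHinf μplus left_mem_uIcc
    simp only [show F = 0 from funext hF, iteratedDeriv_const_zero, mul_zero,
      integral_zero] at this
    linarith
  have hconv := strongConvexOn_integral_mul_comp_sub (convex_uIcc _ _) hFconv hFdiff hw₀
    (aemeasurable_of_aestronglyMeasurable_mul_comp_sub hFdiff.continuous hF₀
      fun μ => (hGint μ).aestronglyMeasurable) hGint hHinf
  have hMS : ∀ a ∈ S, |deriv F (μplus - a)| ≤ M := fun a ha => hM ▸ le_csSup hMbdd ⟨a, ha, rfl⟩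
  have hM₀ : 0 ≤ M := hM ▸ Real.sSup_nonneg (by rintro _ ⟨a, -, rfl⟩; exact abs_nonneg _)
  have hbound := hconv.mul_abs_sub_le_of_isMinOn (hμstar.on_subset (subset_univ _))
    right_mem_uIcc left_mem_uIcc
    (mul_nonneg hε.1 (integral_nonneg fun a => mul_nonneg (hw₀ a) hM₀))
    fun x _ => integral_mixture_mul_comp_sub_le_of_isMinOn hFconv hFd hw₀ hε.1 hμplus hS hMS
      hGint hIntM
  rw [le_div_iff₀ hH]
  linarith

theorem awr_general_robustness_bound
    (F : ℝ → ℝ) (hFconv : ConvexOn ℝ Set.univ F)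
    (hFdiff : ContDiff ℝ 2 F)
    (pplus pminus : Measure ℝ)
    [IsProbabilityMeasure pplus] [IsProbabilityMeasure pminus]
    (ε : ℝ) (hε : ε ∈ Set.Icc (0:ℝ) 1)
    (pβ : Measure ℝ)
    (hpβ : pβ = (ENNReal.ofReal (1 - ε)) • pplus + (ENNReal.ofReal ε) • pminus)
    (w : ℝ → ℝ) (hw : ∀ a, 0 < w a)
    (G Gplus : ℝ → ℝ)
    (hG : ∀ μ, G μ = ∫ a, w a * F (μ - a) ∂pβ)
    (hGplus : ∀ μ, Gplus μ = ∫ a, w a * F (μ - a) ∂pplus)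
    (hGint : ∀ μ, Integrable (fun a => w a * F (μ - a)) pβ)
    (hGplusint : ∀ μ, Integrable (fun a => w a * F (μ - a)) pplus)
    (μstar μplus : ℝ)
    (hμstar : IsMinOn G Set.univ μstar) (hμstarFO : HasDerivAt G 0 μstar)
    (hμplus : IsMinOn Gplus Set.univ μplus) (hμplusFO : HasDerivAt Gplus 0 μplus)
    (H : ℝ) (hH : 0 < H)
    (hHinf : ∀ ξ ∈ Set.uIcc μplus μstar,
      H ≤ ∫ a, w a * iteratedDeriv 2 F (ξ - a) ∂pβ)
    (S : Set ℝ) (hS : pminus Sᶜ = 0)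
    (M : ℝ) (hM : M = sSup ((fun a => |deriv F (μplus - a)|) '' S))
    (hMbdd : BddAbove ((fun a => |deriv F (μplus - a)|) '' S))
    (hIntM : Integrable (fun a => w a * M) pminus) :
    |μstar - μplus| ≤ ε * (∫ a, w a * M ∂pminus) / H :=
  awr_general_robustness_bound_general F hFconv hFdiff pplus pminus ε hε pβ hpβ w hw G Gplus hG
    hGplus hGint μstar μplus hμstar hμplus H hH hHinf S hS M hM hMbdd hIntM
end

section
/- Let c₁, c₂, c₃ > 0 and define the Flat loss f(x) = −log(c₂·exp(−c₁x²) + c₃) + c₄ for any constant c₄. Then f is differentiable everywhere, f′(x) = 2c₁c₂·x·exp(−c₁x²)/(c₂·exp(−c₁x²) + c₃), and f′(x) → 0 as |x| → ∞. Moreover |f′(x)| ≤ 2c₁c₂|x|·exp(−c₁x²)/c₃ for all x, so sup_x |f′(x)| is finite. -/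
/-!
The derivative is `2c₁c₂ x e^{-c₁x²}` over a denominator that is at least `c₃`, so it is
dominated by the Gaussian moment `|x| e^{-c₁x²}` and vanishes at infinity; a continuous function
vanishing at infinity is bounded.
-/

open Filter

open Set Real Topology

noncomputable def flatLoss (c₁ c₂ c₃ c₄ x : ℝ) : ℝ :=
  -log (c₂ * exp (-c₁ * x ^ 2) + c₃) + c₄

noncomputable def flatLossDeriv (c₁ c₂ c₃ x : ℝ) : ℝ :=
  2 * c₁ * c₂ * x * exp (-c₁ * x ^ 2) / (c₂ * exp (-c₁ * x ^ 2) + c₃)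

theorem ZeroAtInftyContinuousMap.bddAbove_range_norm {α E : Type*} [TopologicalSpace α]
    [SeminormedAddCommGroup E] (g : ZeroAtInftyContinuousMap α E) :
    BddAbove (range fun x => ‖g x‖) := by
  obtain ⟨C, hC⟩ := isBounded_iff_forall_norm_le.1 g.isBounded_range
  exact ⟨C, by rintro _ ⟨x, rfl⟩; exact hC _ ⟨x, rfl⟩⟩

section FlatLoss

variable {c₁ c₂ c₃ : ℝ}

theorem flatLoss_denom_pos (hc₂ : 0 ≤ c₂) (hc₃ : 0 < c₃) (x : ℝ) :
    0 < c₂ * exp (-c₁ * x ^ 2) + c₃ := by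
  positivity

theorem hasDerivAt_flatLoss (hc₂ : 0 ≤ c₂) (hc₃ : 0 < c₃) (c₄ x : ℝ) :
    HasDerivAt (flatLoss c₁ c₂ c₃ c₄) (flatLossDeriv c₁ c₂ c₃ x) x := by
  have hquad : HasDerivAt (fun x : ℝ => -c₁ * x ^ 2) (-c₁ * (2 * x)) x := by
    simpa using (hasDerivAt_pow 2 x).const_mul (-c₁)
  have hdenom := ((hquad.exp).const_mul c₂).add_const c₃
  refine ((hdenom.log (flatLoss_denom_pos hc₂ hc₃ x).ne').neg.add_const c₄).congr_deriv ?_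
  rw [flatLossDeriv]
  ring

theorem continuous_flatLossDeriv (hc₂ : 0 ≤ c₂) (hc₃ : 0 < c₃) :
    Continuous (flatLossDeriv c₁ c₂ c₃) :=
  Continuous.div (by fun_prop) (by fun_prop) fun x => (flatLoss_denom_pos hc₂ hc₃ x).ne'

theorem abs_flatLossDeriv_le (hc₁ : 0 ≤ c₁) (hc₂ : 0 ≤ c₂) (hc₃ : 0 < c₃) (x : ℝ) :
    |flatLossDeriv c₁ c₂ c₃ x| ≤ 2 * c₁ * c₂ * |x| * exp (-c₁ * x ^ 2) / c₃ := by
  rw [flatLossDeriv, abs_div, abs_of_pos (flatLoss_denom_pos hc₂ hc₃ x), abs_mul,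
    abs_mul, abs_of_nonneg (by positivity : 0 ≤ 2 * c₁ * c₂), abs_of_pos (exp_pos _)]
  gcongr
  exact le_add_of_nonneg_left (by positivity)

theorem tendsto_flatLossDeriv_cocompact (hc₁ : 0 < c₁) (hc₂ : 0 ≤ c₂) (hc₃ : 0 < c₃) :
    Tendsto (flatLossDeriv c₁ c₂ c₃) (cocompact ℝ) (𝓝 0) := by
  have hgauss := (tendsto_rpow_abs_mul_exp_neg_mul_sq_cocompact hc₁ 1).const_mul
    (2 * c₁ * c₂ / c₃)
  rw [mul_zero] at hgauss
  refine squeeze_zero_norm (fun x => ?_) hgauss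
  calc ‖flatLossDeriv c₁ c₂ c₃ x‖ ≤ 2 * c₁ * c₂ * |x| * exp (-c₁ * x ^ 2) / c₃ :=
        abs_flatLossDeriv_le hc₁.le hc₂ hc₃ x
    _ = 2 * c₁ * c₂ / c₃ * (|x| ^ (1 : ℝ) * exp (-c₁ * x ^ 2)) := by
        rw [rpow_one]; ring

end FlatLoss

theorem flat_loss_properties
    (c₁ c₂ c₃ c₄ : ℝ) (h1 : 0 < c₁) (h2 : 0 < c₂) (h3 : 0 < c₃)
    (f : ℝ → ℝ)
    (hf : ∀ x, f x = -Real.log (c₂ * Real.exp (-c₁ * x ^ 2) + c₃) + c₄) :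
    Differentiable ℝ f ∧
    (∀ x, deriv f x =
      2 * c₁ * c₂ * x * Real.exp (-c₁ * x ^ 2) /
        (c₂ * Real.exp (-c₁ * x ^ 2) + c₃)) ∧
    Tendsto (deriv f) atTop (nhds 0) ∧ Tendsto (deriv f) atBot (nhds 0) ∧
    (∀ x, |deriv f x| ≤ 2 * c₁ * c₂ * |x| * Real.exp (-c₁ * x ^ 2) / c₃) ∧
    BddAbove (Set.range fun x => |deriv f x|) := by
  obtain rfl : f = flatLoss c₁ c₂ c₃ c₄ := funext hf
  have hderiv : deriv (flatLoss c₁ c₂ c₃ c₄) = flatLossDeriv c₁ c₂ c₃ :=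
    funext fun x => (hasDerivAt_flatLoss h2.le h3 c₄ x).deriv
  have hvanish := tendsto_flatLossDeriv_cocompact h1 h2.le h3
  rw [hderiv]
  exact ⟨fun x => (hasDerivAt_flatLoss h2.le h3 c₄ x).differentiableAt, fun _ => rfl,
    hvanish.mono_left atTop_le_cocompact, hvanish.mono_left atBot_le_cocompact,
    abs_flatLossDeriv_le h1.le h2.le h3,
    ZeroAtInftyContinuousMap.bddAbove_range_norm ⟨⟨_, continuous_flatLossDeriv h2.le h3⟩, hvanish⟩⟩
end

section
/- Let c₁, c₂, c₃ > 0 and define the Skew loss f(x) = −log(c₂·(exp(−c₁x²) + 1/(c₃|x| + 1))) + c₄. Then f(x) → +∞ as |x| → ∞, and f(x) ≤ −log c₂ + c₄ + log(c₃|x| + 1) for all x; in particular f grows at most logarithmically in |x|. -/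
/-!
Both summands inside the logarithm tend to `0` as `|x| → ∞`, so the argument of `-log` tends
to `0⁺` and the loss blows up. For the upper bound, drop the Gaussian term: the argument of the
logarithm is at least `c₂ / (c₃ |x| + 1)`, and `-log` is antitone.
-/

open Filter Topology

section SkewLoss

variable {l : Filter ℝ}

lemma tendsto_exp_neg_mul_sq_nhds_zero {c : ℝ} (hc : 0 < c) (hl : Tendsto (|·|) l atTop) :
    Tendsto (fun x => Real.exp (-c * x ^ 2)) l (𝓝 0) := by
  have hsq : Tendsto (fun x : ℝ => x ^ 2) l atTop := by
    simpa only [Function.comp_def, sq_abs] using (tendsto_pow_atTop two_ne_zero).comp hl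
  refine Real.tendsto_exp_atBot.comp ?_
  simpa only [Function.comp_def, neg_mul] using
    tendsto_neg_atTop_atBot.comp (hsq.const_mul_atTop hc)

lemma tendsto_one_div_mul_abs_add_one_nhds_zero {c : ℝ} (hc : 0 < c)
    (hl : Tendsto (|·|) l atTop) : Tendsto (fun x => 1 / (c * |x| + 1)) l (𝓝 0) := by
  simpa only [Function.comp_def, one_div] using
    tendsto_inv_atTop_zero.comp (tendsto_atTop_add_const_right _ 1 (hl.const_mul_atTop hc))

lemma tendsto_neg_log_add_atTop {g : ℝ → ℝ} (hg : Tendsto g l (𝓝[>] 0)) (c : ℝ) :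
    Tendsto (fun x => -Real.log (g x) + c) l atTop :=
  tendsto_atTop_add_const_right _ c
    (tendsto_neg_atBot_atTop.comp (Real.tendsto_log_nhdsGT_zero.comp hg))

lemma neg_log_mul_le_of_inv_le {a d s : ℝ} (ha : 0 < a) (hd : 0 < d) (hs : 1 / d ≤ s) :
    -Real.log (a * s) ≤ -Real.log a + Real.log d := by
  have hs_pos : 0 < s := (one_div_pos.mpr hd).trans_le hs
  have hlog : -Real.log d ≤ Real.log s := by
    simpa only [one_div, Real.log_inv] using Real.log_le_log (one_div_pos.mpr hd) hs
  rw [Real.log_mul ha.ne' hs_pos.ne']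
  linarith

end SkewLoss

theorem skew_loss_properties
    (c₁ c₂ c₃ c₄ : ℝ) (h1 : 0 < c₁) (h2 : 0 < c₂) (h3 : 0 < c₃)
    (f : ℝ → ℝ)
    (hf : ∀ x, f x =
      -Real.log (c₂ * (Real.exp (-c₁ * x ^ 2) + 1 / (c₃ * |x| + 1))) + c₄) :
    Tendsto f atTop atTop ∧ Tendsto f atBot atTop ∧
      ∀ x, f x ≤ -Real.log c₂ + c₄ + Real.log (c₃ * |x| + 1) := by
  obtain rfl := funext hf
  have tendsto_of_abs : ∀ l : Filter ℝ, Tendsto (|·|) l atTop → Tendsto (fun x =>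
      -Real.log (c₂ * (Real.exp (-c₁ * x ^ 2) + 1 / (c₃ * |x| + 1))) + c₄) l atTop := by
    intro l hl
    have h0 : Tendsto (fun x => c₂ * (Real.exp (-c₁ * x ^ 2) + 1 / (c₃ * |x| + 1)))
        l (𝓝 0) := by
      simpa only [add_zero, mul_zero] using
        ((tendsto_exp_neg_mul_sq_nhds_zero h1 hl).add
          (tendsto_one_div_mul_abs_add_one_nhds_zero h3 hl)).const_mul c₂
    exact tendsto_neg_log_add_atTop (tendsto_nhdsWithin_of_tendsto_nhds_of_eventually_within _ h0
      (Eventually.of_forall fun x => Set.mem_Ioi.mpr (by positivity))) c₄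
  refine ⟨tendsto_of_abs atTop tendsto_abs_atTop_atTop,
    tendsto_of_abs atBot tendsto_abs_atBot_atTop, fun x => ?_⟩
  have hbound := neg_log_mul_le_of_inv_le h2 (by positivity : 0 < c₃ * |x| + 1)
    (le_add_of_nonneg_left (Real.exp_pos (-c₁ * x ^ 2)).le)
  linarith
end
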